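/- (Asymptotic hook-length formula.) Let j ≥ 1 and let μ = (λ₂ ≥ λ₃ ≥ …) be a fixed partition of j. For n large enough that n − j ≥ λ₂, let λ(n) = (n−j, λ₂, λ₃, …), a partition of n. Then there exists a constant C > 0 such that for all sufficiently large n, | d_{λ(n)} − C(n,j)·d_μ·(1 − j/n) | ≤ C · C(n,j) · d_μ / n²; in particular d_{λ(n)} = C(n,j)·d_μ·(1 − j/n + O(1/n²)) as n → ∞. -/

import Mathlib

/-!
Deleting the top row of a standard tableau of `λ(n) = (n - j, μ)` leaves a row- and
column-increasing injective filling of `μ` by `{0, …, n - 1}`; conversely such a filling `g`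
extends (uniquely) to a standard tableau of `λ(n)` exactly when the values it misses, listed
increasingly, can serve as the top row. By standardization there are `C(n, j) d_μ` such fillings,
and `C(n - 1, j) d_μ = C(n, j) d_μ (1 - j / n)` of them avoid `0`, as every extendable one does.
A non-extendable filling avoiding `0` has two entries below `2j`, and there are at most
`C(2j, 2) C(n - 2, j - 2) d_μ = O(C(n, j) d_μ / n²)` fillings of that kind.
-/

/-- The number of standard Young tableaux of shape `μ`. -/
noncomputable def sytCard (μ : YoungDiagram) : ℕ :=
  Nat.card {f : {c // c ∈ μ.cells} → Fin μ.card //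
    Function.Bijective f ∧
    (∀ a b : {c // c ∈ μ.cells}, a.1.1 = b.1.1 → a.1.2 < b.1.2 → f a < f b) ∧
    (∀ a b : {c // c ∈ μ.cells}, a.1.2 = b.1.2 → a.1.1 < b.1.1 → f a < f b)}

/-- The Young diagram of a partition of `n`. -/
noncomputable def Nat.Partition.toYD {n : ℕ} (p : n.Partition) : YoungDiagram :=
  YoungDiagram.ofRowLens (p.parts.sort (· ≥ ·)) (List.sortedGE_iff_pairwise.mpr (Multiset.pairwise_sort ..))

/-- The dimension `d_λ`: the number of standard Young tableaux of shape `λ`. -/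
noncomputable def dPart {n : ℕ} (p : n.Partition) : ℕ := sytCard p.toYD


open Finset

theorem Finset.orderEmbOfFin_lt_of_le_card_filter_lt {α : Type*} [LinearOrder α] {s : Finset α}
    {r : ℕ} (h : #s = r) {i : Fin r} {y : α} (hy : i + 1 ≤ #{x ∈ s | x < y}) :
    s.orderEmbOfFin h i < y := by
  by_contra! hle
  have hsub : {x ∈ s | x < y} ⊆ (Iio i).image (s.orderEmbOfFin h) := by
    intro x hx
    rw [mem_filter] at hx
    obtain ⟨t, rfl⟩ : x ∈ Set.range (s.orderEmbOfFin h) := by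
      rw [range_orderEmbOfFin]; exact hx.1
    exact mem_image_of_mem _ (mem_Iio.2 ((s.orderEmbOfFin h).lt_iff_lt.1 (hx.2.trans_le hle)))
  have := (card_le_card hsub).trans card_image_le
  rw [Fin.card_Iio] at this
  omega

theorem Fin.card_powersetCard_filter_zero_notMem (n j : ℕ) [NeZero n] :
    #{S ∈ powersetCard j (univ : Finset (Fin n)) | 0 ∉ S} = (n - 1).choose j := by
  have : {S ∈ powersetCard j (univ : Finset (Fin n)) | 0 ∉ S} =
      powersetCard j (univ.erase 0) := by
    ext S
    simp [mem_powersetCard, subset_erase, and_comm]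
  rw [this, card_powersetCard, card_erase_of_mem (mem_univ _), card_univ, Fintype.card_fin]

theorem Fin.card_powersetCard_filter_two_le_le (n j m : ℕ) (hj : 2 ≤ j) :
    #{S ∈ powersetCard j (univ : Finset (Fin n)) | 2 ≤ #{x ∈ S | x.val < m}} ≤
      m.choose 2 * (n - 2).choose (j - 2) := by
  set P := powersetCard 2 {x : Fin n | x.val < m}
  have hcover : {S ∈ powersetCard j (univ : Finset (Fin n)) | 2 ≤ #{x ∈ S | x.val < m}} ⊆
      P.biUnion fun T => {S ∈ powersetCard j univ | T ⊆ S} := by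
    intro S hS
    rw [mem_filter] at hS
    obtain ⟨T, hTS, hT⟩ := exists_subset_card_eq hS.2
    refine mem_biUnion.2 ⟨T, mem_powersetCard.2 ⟨fun x hx => ?_, hT⟩,
      mem_filter.2 ⟨hS.1, hTS.trans (filter_subset _ _)⟩⟩
    exact mem_filter.2 ⟨mem_univ x, (mem_filter.1 (hTS hx)).2⟩
  have hfiber : ∀ T ∈ P, #{S ∈ powersetCard j (univ : Finset (Fin n)) | T ⊆ S} =
      (n - 2).choose (j - 2) := fun T hT => by
    rw [mem_powersetCard] at hT
    rw [card_filter_powersetCard_subset _ _ _ (subset_univ T) (hT.2 ▸ hj), hT.2, card_univ,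
      Fintype.card_fin]
  have hP : #P ≤ m.choose 2 := by
    rw [card_powersetCard, Fin.card_filter_val_lt]
    exact Nat.choose_le_choose 2 (min_le_right n m)
  calc _ ≤ ∑ T ∈ P, #{S ∈ powersetCard j (univ : Finset (Fin n)) | T ⊆ S} :=
        (card_le_card hcover).trans card_biUnion_le
    _ = #P * (n - 2).choose (j - 2) := by rw [sum_congr rfl hfiber, Finset.sum_const, smul_eq_mul]
    _ ≤ m.choose 2 * (n - 2).choose (j - 2) := Nat.mul_le_mul_right _ hP

theorem Fin.card_powersetCard_filter_two_le_mul_le (n j m : ℕ) :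
    #{S ∈ powersetCard j (univ : Finset (Fin n)) | 2 ≤ #{x ∈ S | x.val < m}} * n.choose 2 ≤
      m.choose 2 * j.choose 2 * n.choose j := by
  rcases lt_or_ge j 2 with hj | hj
  · rw [filter_false_of_mem fun S hS =>
      not_le.2 ((card_filter_le _ _).trans_lt ((mem_powersetCard.1 hS).2 ▸ hj)), card_empty,
      zero_mul]
    exact Nat.zero_le _
  · calc _ ≤ m.choose 2 * (n - 2).choose (j - 2) * n.choose 2 :=
          Nat.mul_le_mul_right _ (card_powersetCard_filter_two_le_le n j m hj)
      _ = m.choose 2 * j.choose 2 * n.choose j := by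
          rw [mul_assoc, mul_comm ((n - 2).choose _), ← Nat.choose_mul hj]; ring

theorem Nat.sq_le_four_mul_choose_two {n : ℕ} (hn : 2 ≤ n) : n ^ 2 ≤ 4 * n.choose 2 := by
  obtain ⟨m, rfl⟩ : ∃ m, n = m + 2 := ⟨n - 2, by omega⟩
  have h := Nat.add_one_mul_choose_eq (m + 1) 1
  rw [Nat.choose_one_right] at h
  nlinarith

theorem Nat.cast_choose_mul_one_sub_div {K : Type*} [Field K] [CharZero K] {n j : ℕ}
    (hn : n ≠ 0) (hjn : j ≤ n) :
    (n.choose j : K) * (1 - j / n) = (n - 1).choose j := by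
  have h := Nat.choose_mul_succ_eq (n - 1) j
  rw [Nat.sub_add_cancel (Nat.one_le_iff_ne_zero.2 hn)] at h
  have hK : ((n - 1).choose j : K) * n = n.choose j * (n - j) := by
    rw [← Nat.cast_sub hjn]; exact_mod_cast h
  rw [one_sub_div (Nat.cast_ne_zero.2 hn), mul_div_assoc', div_eq_iff (Nat.cast_ne_zero.2 hn), hK]

namespace YoungDiagram

variable {D Λ : YoungDiagram} {r k m n : ℕ}

theorem card_cellsOfRowLens (w : List ℕ) : #(YoungDiagram.cellsOfRowLens w) = w.sum := by
  induction w with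
  | nil => rfl
  | cons a w ih =>
    rw [YoungDiagram.cellsOfRowLens, card_union_of_disjoint, card_map, ih, card_product,
      card_singleton, card_range, one_mul, List.sum_cons]
    simp [disjoint_left]

theorem card_ofRowLens (w : List ℕ) (hw : w.SortedGE) : (ofRowLens w hw).card = w.sum :=
  card_cellsOfRowLens w

structure IsConsRow (Λ : YoungDiagram) (r : ℕ) (D : YoungDiagram) : Prop where
  mem_zero_iff {k : ℕ} : (0, k) ∈ Λ ↔ k < r
  mem_succ_iff {i k : ℕ} : (i + 1, k) ∈ Λ ↔ (i, k) ∈ D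

theorem IsConsRow.card_eq (h : Λ.IsConsRow r D) : Λ.card = r + D.card := by
  have hcells : Λ.cells = (range r).image (0, ·) ∪ D.cells.image (fun c => (c.1 + 1, c.2)) := by
    ext ⟨_ | i, k⟩ <;> simp [h.mem_zero_iff, h.mem_succ_iff]
  rw [YoungDiagram.card, hcells, card_union_of_disjoint (by simp [disjoint_left]),
    card_image_of_injective _ (fun _ _ => congrArg Prod.snd), card_range,
    card_image_of_injective _ (fun _ _ h => by simpa [Prod.ext_iff] using h)]

theorem snd_lt_card_of_mem {c : ℕ × ℕ} (h : c ∈ D) : c.2 < D.card := by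
  rw [← Prod.mk.eta (p := c), mem_iff_lt_rowLen, rowLen_eq_card] at h
  exact h.trans_le (card_le_card (filter_subset _ _))

structure IsInjTableau (g : D.cells → Fin m) : Prop where
  injective : Function.Injective g
  row_lt : ∀ a b : D.cells, a.1.1 = b.1.1 → a.1.2 < b.1.2 → g a < g b
  col_lt : ∀ a b : D.cells, a.1.2 = b.1.2 → a.1.1 < b.1.1 → g a < g b

variable (D m) in
abbrev InjTableau : Type := {g : D.cells → Fin m // IsInjTableau g}

theorem sytCard_eq_card_injTableau (D : YoungDiagram) :
    sytCard D = Nat.card (InjTableau D D.card) := by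
  refine Nat.card_congr (Equiv.subtypeEquivRight fun f => ?_)
  rw [Fintype.bijective_iff_injective_and_card, Fintype.card_coe, Fintype.card_fin]
  exact ⟨fun ⟨⟨hi, _⟩, hr, hc⟩ => ⟨hi, hr, hc⟩,
    fun ⟨hi, hr, hc⟩ => ⟨⟨hi, rfl⟩, hr, hc⟩⟩

theorem IsInjTableau.monotone {g : D.cells → Fin m} (hg : IsInjTableau g) : Monotone g := by
  rintro ⟨⟨i, j⟩, ha⟩ ⟨⟨i', j'⟩, hb⟩ ⟨hi, hj⟩
  have hc : (i, j') ∈ D.cells := D.up_left_mem le_rfl le_rfl (D.up_left_mem hi le_rfl hb)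
  calc g ⟨(i, j), ha⟩ ≤ g ⟨(i, j'), hc⟩ := by
        rcases (show j ≤ j' from hj).lt_or_eq with hj | rfl
        · exact (hg.row_lt ⟨_, ha⟩ ⟨_, hc⟩ rfl hj).le
        · rfl
    _ ≤ g ⟨(i', j'), hb⟩ := by
        rcases (show i ≤ i' from hi).lt_or_eq with hi | rfl
        · exact (hg.col_lt ⟨_, hc⟩ ⟨_, hb⟩ rfl hi).le
        · rfl

theorem IsInjTableau.strictMono {g : D.cells → Fin m} (hg : IsInjTableau g) : StrictMono g :=
  hg.monotone.strictMono_of_injective hg.injective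

theorem isInjTableau_comp_iff {φ : Fin k → Fin m} (hφ : StrictMono φ) {g : D.cells → Fin k} :
    IsInjTableau (φ ∘ g) ↔ IsInjTableau g := by
  refine ⟨fun ⟨hi, hr, hc⟩ => ⟨?_, ?_, ?_⟩, fun ⟨hi, hr, hc⟩ => ⟨?_, ?_, ?_⟩⟩
  · exact hφ.injective.of_comp_iff _ |>.1 hi
  · exact fun a b h h' => hφ.lt_iff_lt.1 (hr a b h h')
  · exact fun a b h h' => hφ.lt_iff_lt.1 (hc a b h h')
  · exact hφ.injective.comp hi
  · exact fun a b h h' => hφ (hr a b h h')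
  · exact fun a b h h' => hφ (hc a b h h')

theorem card_univ_image {g : D.cells → Fin m} (hg : Function.Injective g) :
    #(univ.image g) = D.card := by
  rw [card_image_of_injective _ hg, card_univ, Fintype.card_coe]

noncomputable def injTableauWithEntriesEquiv (S : Finset (Fin m)) (hS : #S = D.card) :
    {g : InjTableau D m // univ.image g.1 = S} ≃ InjTableau D D.card where
  toFun g :=
    ⟨fun c => (S.orderIsoOfFin hS).symm
        ⟨g.1.1 c, by obtain ⟨g, rfl⟩ := g; exact mem_image_of_mem _ (mem_univ c)⟩, by
      rw [← isInjTableau_comp_iff (S.orderEmbOfFin hS).strictMono]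
      convert g.1.2 using 1
      ext c
      simp [← coe_orderIsoOfFin_apply]⟩
  invFun T := ⟨⟨S.orderEmbOfFin hS ∘ T.1,
      (isInjTableau_comp_iff (orderEmbOfFin S hS).strictMono).2 T.2⟩,
    by
      have hT : Function.Surjective T.1 :=
        ((Fintype.bijective_iff_injective_and_card _).2 ⟨T.2.injective, by simp⟩).2
      rw [← image_image, image_univ_of_surjective hT, image_orderEmbOfFin_univ]⟩
  left_inv g := by
    ext c
    simp [← coe_orderIsoOfFin_apply]
  right_inv T := by
    ext c
    simp [← coe_orderIsoOfFin_apply]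

variable (D m) in
noncomputable def standardizationEquiv :
    InjTableau D m ≃ {S : Finset (Fin m) // #S = D.card} × InjTableau D D.card :=
  let entries (g : InjTableau D m) : {S : Finset (Fin m) // #S = D.card} :=
    ⟨univ.image g.1, card_univ_image g.2.injective⟩
  (Equiv.sigmaFiberEquiv entries).symm.trans <|
    (Equiv.sigmaCongrRight fun S => (Equiv.subtypeEquivRight fun _ => Subtype.ext_iff).trans
      (injTableauWithEntriesEquiv S.1 S.2)).trans (Equiv.sigmaEquivProd _ _)

theorem card_injTableau_filter_image (p : Finset (Fin m) → Prop) [DecidablePred p] :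
    Nat.card {g : InjTableau D m // p (univ.image g.1)} =
      #{S ∈ powersetCard D.card univ | p S} * sytCard D := by
  rw [sytCard_eq_card_injTableau, ← Nat.card_eq_finsetCard, ← Nat.card_prod]
  refine Nat.card_congr <| (Equiv.subtypeEquiv (q := fun x => p x.1.1)
    (standardizationEquiv D m) fun _ => Iff.rfl).trans <|
    (Equiv.prodSubtypeFstEquivSubtypeProd
      (p := fun S : {S : Finset (Fin m) // #S = D.card} => p S.1)).trans <|
    Equiv.prodCongr ?_ (Equiv.refl _)
  exact (Equiv.subtypeSubtypeEquivSubtypeInter _ _).trans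
    (Equiv.subtypeEquivRight fun S => by simp)

/-- The condition for the values missed by `g`, listed increasingly, to fill a top row above
`g`: the `k`-th of them must lie below `g (0, k)`. -/
def AdmitsTopRow (g : D.cells → Fin m) : Prop :=
  ∀ k (h : (0, k) ∈ D.cells), k + 1 ≤ #{x ∈ (univ.image g)ᶜ | x < g ⟨(0, k), h⟩}

namespace IsConsRow

def shiftCell (hΛ : Λ.IsConsRow r D) (c : D.cells) : Λ.cells :=
  ⟨(c.1.1 + 1, c.1.2), hΛ.mem_succ_iff.2 c.2⟩

theorem isInjTableau_comp_shiftCell (hΛ : Λ.IsConsRow r D) {f : Λ.cells → Fin m}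
    (hf : IsInjTableau f) : IsInjTableau (f ∘ hΛ.shiftCell) where
  injective a b h := by
    have := congrArg Subtype.val (hf.injective h)
    simp only [shiftCell, Prod.mk.injEq, add_left_inj] at this
    exact Subtype.ext (Prod.ext this.1 this.2)
  row_lt a b h h' := hf.row_lt _ _ (by simp [shiftCell, h]) h'
  col_lt a b h h' := hf.col_lt _ _ h (by simpa [shiftCell] using h')

theorem top_notMem_image_comp_shiftCell (hΛ : Λ.IsConsRow r D) {f : Λ.cells → Fin m}
    (hf : Function.Injective f) (h : (0, k) ∈ Λ.cells) :
    f ⟨(0, k), h⟩ ∉ univ.image (f ∘ hΛ.shiftCell) := by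
  simp only [mem_image, mem_univ, true_and, Function.comp_apply, not_exists]
  intro c hc
  simpa [shiftCell] using congrArg (·.1.1) (hf hc)

theorem admitsTopRow_comp_shiftCell (hΛ : Λ.IsConsRow r D) {f : Λ.cells → Fin m}
    (hf : IsInjTableau f) : AdmitsTopRow (f ∘ hΛ.shiftCell) := by
  intro k hk
  have hrow : ∀ t ≤ k, (0, t) ∈ Λ.cells := fun t ht =>
    Λ.up_left_mem (Nat.zero_le 1) ht (hΛ.mem_succ_iff.2 hk)
  have hsub : (Iic k).attach.image (fun t => f ⟨(0, t.1), hrow t.1 (mem_Iic.1 t.2)⟩) ⊆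
      {x ∈ (univ.image (f ∘ hΛ.shiftCell))ᶜ | x < f (hΛ.shiftCell ⟨(0, k), hk⟩)} := by
    intro x hx
    obtain ⟨⟨t, ht⟩, -, rfl⟩ := mem_image.1 hx
    exact mem_filter.2 ⟨mem_compl.2 <| hΛ.top_notMem_image_comp_shiftCell hf.injective _,
      hf.strictMono (show ((0, t) : ℕ × ℕ) < (1, k) from
        Prod.lt_of_lt_of_le Nat.zero_lt_one (mem_Iic.1 ht))⟩
  have hinj : Function.Injective (fun t : Iic k => f ⟨(0, t.1), hrow t.1 (mem_Iic.1 t.2)⟩) :=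
    fun a b h => Subtype.ext (by simpa using congrArg (·.1.2) (hf.injective h))
  simpa [card_image_of_injective _ hinj] using card_le_card hsub

theorem card_compl_image (hΛ : Λ.IsConsRow r D) {g : D.cells → Fin Λ.card}
    (hg : Function.Injective g) : #(univ.image g)ᶜ = r := by
  rw [card_compl, card_univ_image hg, Fintype.card_fin, hΛ.card_eq, Nat.add_sub_cancel]

noncomputable def consTopRow (hΛ : Λ.IsConsRow r D) {g : D.cells → Fin Λ.card}
    (hg : Function.Injective g) : Λ.cells → Fin Λ.card
  | ⟨(0, k), h⟩ =>
    (univ.image g)ᶜ.orderEmbOfFin (hΛ.card_compl_image hg) ⟨k, hΛ.mem_zero_iff.1 h⟩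
  | ⟨(i + 1, k), h⟩ => g ⟨(i, k), hΛ.mem_succ_iff.1 h⟩

theorem isInjTableau_consTopRow (hΛ : Λ.IsConsRow r D) {g : D.cells → Fin Λ.card}
    (hg : IsInjTableau g) (hadm : AdmitsTopRow g) : IsInjTableau (hΛ.consTopRow hg.injective) where
  injective := by
    have hmiss : ∀ i k h k' h',
        (univ.image g)ᶜ.orderEmbOfFin (hΛ.card_compl_image hg.injective) ⟨k, h⟩ ≠
          g ⟨(i, k'), h'⟩ := fun i k h k' h' he =>
      mem_compl.1 (he ▸ orderEmbOfFin_mem _ _ _) (mem_image_of_mem _ (mem_univ _))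
    rintro ⟨⟨_ | i, k⟩, ha⟩ ⟨⟨_ | i', k'⟩, hb⟩ h <;> simp only [consTopRow] at h
    · simpa using (orderEmbOfFin _ _).injective h
    · exact (hmiss _ _ _ _ _ h).elim
    · exact (hmiss _ _ _ _ _ h.symm).elim
    · simpa using hg.injective h
  row_lt := by
    rintro ⟨⟨_ | i, k⟩, ha⟩ ⟨⟨_ | i', k'⟩, hb⟩ (h : _ = _) (hk : k < k') <;>
      simp only [consTopRow, reduceCtorEq, add_left_inj] at h ⊢
    · exact (orderEmbOfFin _ _).strictMono (Fin.mk_lt_mk.2 hk)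
    · exact hg.row_lt ⟨_, _⟩ ⟨_, _⟩ h hk
  col_lt := by
    rintro ⟨⟨_ | i, k⟩, ha⟩ ⟨⟨_ | i', k'⟩, hb⟩ (rfl : k = k') (hi : _ < _) <;>
      simp only [consTopRow, lt_self_iff_false, not_lt_zero, add_lt_add_iff_right] at hi ⊢
    · have h0 : (0, k) ∈ D.cells := D.up_left_mem (Nat.zero_le i') le_rfl (hΛ.mem_succ_iff.1 hb)
      exact (orderEmbOfFin_lt_of_le_card_filter_lt _ (hadm k h0)).trans_le
        (hg.monotone (show ((0, k) : ℕ × ℕ) ≤ (i', k) from ⟨Nat.zero_le i', le_rfl⟩))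
    · exact hg.col_lt ⟨_, _⟩ ⟨_, _⟩ rfl hi

theorem consTopRow_comp_shiftCell (hΛ : Λ.IsConsRow r D) {f : Λ.cells → Fin Λ.card}
    (hf : IsInjTableau f) :
    hΛ.consTopRow (hΛ.isInjTableau_comp_shiftCell hf).injective = f := by
  funext c
  obtain ⟨⟨_ | i, k⟩, h⟩ := c
  · have htop := orderEmbOfFin_unique
      (hΛ.card_compl_image (hΛ.isInjTableau_comp_shiftCell hf).injective)
      (f := fun t : Fin r => f ⟨(0, t), hΛ.mem_zero_iff.2 t.2⟩)
      (fun t => mem_compl.2 (hΛ.top_notMem_image_comp_shiftCell hf.injective _))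
      (fun s t hst => hf.row_lt ⟨_, _⟩ ⟨_, _⟩ rfl hst)
    exact (congrFun htop ⟨k, hΛ.mem_zero_iff.1 h⟩).symm
  · rfl

noncomputable def injTableauEquiv (hΛ : Λ.IsConsRow r D) :
    InjTableau Λ Λ.card ≃ {g : InjTableau D Λ.card // AdmitsTopRow g.1} where
  toFun f := ⟨⟨f.1 ∘ hΛ.shiftCell, hΛ.isInjTableau_comp_shiftCell f.2⟩,
    hΛ.admitsTopRow_comp_shiftCell f.2⟩
  invFun g := ⟨hΛ.consTopRow g.1.2.injective, hΛ.isInjTableau_consTopRow g.1.2 g.2⟩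
  left_inv f := Subtype.ext (hΛ.consTopRow_comp_shiftCell f.2)
  right_inv _ := rfl

theorem sytCard_eq_card_admitsTopRow (hΛ : Λ.IsConsRow r D) :
    sytCard Λ = Nat.card {g : InjTableau D Λ.card // AdmitsTopRow g.1} := by
  rw [sytCard_eq_card_injTableau]
  exact Nat.card_congr hΛ.injTableauEquiv

end IsConsRow

section

variable [NeZero n]

theorem AdmitsTopRow.zero_notMem_image {g : D.cells → Fin n} (hg : IsInjTableau g)
    (hadm : AdmitsTopRow g) : 0 ∉ univ.image g := by
  intro h0
  obtain ⟨c, -, hc⟩ := mem_image.1 h0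
  have h00 : (0, 0) ∈ D.cells := D.up_left_mem (Nat.zero_le _) (Nat.zero_le _) c.2
  have hcorner : g ⟨(0, 0), h00⟩ = 0 := by
    rw [← nonpos_iff_eq_zero, ← hc]
    exact hg.monotone (show ((0, 0) : ℕ × ℕ) ≤ c.1 from ⟨Nat.zero_le _, Nat.zero_le _⟩)
  simpa [hcorner] using hadm 0 h00

theorem two_le_card_filter_image_of_not_admitsTopRow {g : D.cells → Fin n}
    (hg : IsInjTableau g) (h0 : 0 ∉ univ.image g) (hadm : ¬ AdmitsTopRow g) :
    2 ≤ #{x ∈ univ.image g | x.val < 2 * D.card} := by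
  simp only [AdmitsTopRow, not_forall, not_le, Nat.lt_succ_iff] at hadm
  obtain ⟨k, hk, hfew⟩ := hadm
  set y := g ⟨(0, k), hk⟩
  have hk0 : k ≠ 0 := by
    rintro rfl
    have hy : 0 < y := Fin.pos_iff_ne_zero.2 fun hy => h0 (hy ▸ mem_image_of_mem g (mem_univ _))
    have : (0 : Fin n) ∈ {x ∈ (univ.image g)ᶜ | x < y} :=
      mem_filter.2 ⟨mem_compl.2 h0, hy⟩
    exact (card_pos.2 ⟨_, this⟩).ne' (Nat.le_zero.1 hfew)
  -- below `y` lie at most `D.card` entries of `g` and at most `k < D.card` missed values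
  have hy : y.val < 2 * D.card := by
    have hsplit := card_filter_add_card_filter_not (s := Iio y) (p := (· ∈ univ.image g))
    have hin : #{x ∈ Iio y | x ∈ univ.image g} ≤ D.card :=
      card_univ_image hg.injective ▸ card_le_card fun x hx => (mem_filter.1 hx).2
    have hout : #{x ∈ Iio y | x ∉ univ.image g} ≤ k :=
      (card_le_card fun x hx => by
        rw [mem_filter, mem_Iio] at hx; exact mem_filter.2 ⟨mem_compl.2 hx.2, hx.1⟩).trans hfew
    have := snd_lt_card_of_mem hk
    rw [Fin.card_Iio] at hsplit
    omega
  have h01 : (0, 1) ∈ D.cells := D.up_left_mem le_rfl (Nat.one_le_iff_ne_zero.2 hk0) hk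
  have h00 : (0, 0) ∈ D.cells := D.up_left_mem le_rfl (Nat.zero_le 1) h01
  have hlt : g ⟨(0, 0), h00⟩ < g ⟨(0, 1), h01⟩ :=
    hg.row_lt ⟨_, _⟩ ⟨_, _⟩ rfl Nat.zero_lt_one
  have hle : g ⟨(0, 1), h01⟩ ≤ y := hg.monotone
    (show ((0, 1) : ℕ × ℕ) ≤ (0, k) from ⟨le_rfl, Nat.one_le_iff_ne_zero.2 hk0⟩)
  refine one_lt_card.2 ⟨_, ?_, _, ?_, hlt.ne⟩ <;>
    refine mem_filter.2 ⟨mem_image_of_mem g (mem_univ _), lt_of_le_of_lt ?_ hy⟩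
  · exact Fin.le_def.1 (hlt.le.trans hle)
  · exact Fin.le_def.1 hle

variable (D) in
theorem card_admitsTopRow_add_card_not_admitsTopRow :
    Nat.card {g : InjTableau D n // AdmitsTopRow g.1} +
      Nat.card {g : InjTableau D n // 0 ∉ univ.image g.1 ∧ ¬ AdmitsTopRow g.1} =
    (n - 1).choose D.card * sytCard D := by
  classical
  rw [← Fin.card_powersetCard_filter_zero_notMem, ← card_injTableau_filter_image]
  simp only [Nat.card_eq_fintype_card, Fintype.card_subtype]
  rw [← card_filter_add_card_filter_not (s := {g : InjTableau D n | 0 ∉ univ.image g.1})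
    (p := fun g => AdmitsTopRow g.1), filter_filter, filter_filter]
  congr 2
  ext g
  simp only [mem_filter, mem_univ, true_and]
  exact ⟨fun h => ⟨AdmitsTopRow.zero_notMem_image g.2 h, h⟩, And.right⟩

theorem card_not_admitsTopRow_le :
    Nat.card {g : InjTableau D n // 0 ∉ univ.image g.1 ∧ ¬ AdmitsTopRow g.1} ≤
      #{S ∈ powersetCard D.card (univ : Finset (Fin n)) | 2 ≤ #{x ∈ S | x.val < 2 * D.card}} *
        sytCard D := by
  rw [← card_injTableau_filter_image]
  exact Nat.card_le_card_of_injective _ (Subtype.impEmbedding _ _ fun g hg =>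
    two_le_card_filter_image_of_not_admitsTopRow g.2 hg.1 hg.2).injective

theorem IsConsRow.exists_sytCard_add_eq (hΛ : Λ.IsConsRow r D) [NeZero Λ.card] :
    ∃ B, sytCard Λ + B = (Λ.card - 1).choose D.card * sytCard D ∧
      B * Λ.card.choose 2 ≤
        (2 * D.card).choose 2 * D.card.choose 2 * Λ.card.choose D.card * sytCard D := by
  refine ⟨_, hΛ.sytCard_eq_card_admitsTopRow ▸
    card_admitsTopRow_add_card_not_admitsTopRow D, ?_⟩
  calc _ ≤ #{S ∈ powersetCard D.card (univ : Finset (Fin Λ.card)) |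
          2 ≤ #{x ∈ S | x.val < 2 * D.card}} * Λ.card.choose 2 * sytCard D := by
        rw [mul_right_comm]; exact Nat.mul_le_mul_right _ card_not_admitsTopRow_le
    _ ≤ _ := Nat.mul_le_mul_right _ (Fin.card_powersetCard_filter_two_le_mul_le _ _ _)

end

end YoungDiagram

namespace Nat.Partition

theorem card_toYD {n : ℕ} (p : n.Partition) : p.toYD.card = n := by
  rw [toYD, YoungDiagram.card_ofRowLens, ← Multiset.sum_coe, Multiset.sort_eq, p.parts_sum]

theorem isConsRow_toYD {n j r : ℕ} {lam : n.Partition} {μ : j.Partition}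
    (h : lam.parts = r ::ₘ μ.parts) (hr : ∀ a ∈ μ.parts, a ≤ r) :
    lam.toYD.IsConsRow r μ.toYD := by
  have hsort := Multiset.sort_cons r μ.parts (· ≥ ·) hr
  constructor <;> simp [toYD, YoungDiagram.mem_ofRowLens, h, hsort]

end Nat.Partition

theorem asymptotic_hook_length_formula_general (j : ℕ) (μ : Nat.Partition j) :
    ∃ C : ℝ, 0 < C ∧ ∃ N : ℕ, ∀ n ≥ N, ∀ lam : Nat.Partition n,
      lam.parts = (n - j) ::ₘ μ.parts →
      |(dPart lam : ℝ) - (n.choose j : ℝ) * (dPart μ : ℝ) * (1 - (j : ℝ) / n)| ≤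
        C * (n.choose j : ℝ) * (dPart μ : ℝ) / (n : ℝ) ^ 2 := by
  set K := (2 * j).choose 2 * j.choose 2
  -- `K = 0` for `j ≤ 1`, where the formula is exact, but `C` has to be positive
  refine ⟨4 * K + 1, by positivity, 2 * j + 2, fun n hn lam hlam => ?_⟩
  have hΛ := Nat.Partition.isConsRow_toYD hlam fun a ha => (μ.le_of_mem_parts ha).trans (by omega)
  have : NeZero lam.toYD.card := ⟨by rw [Nat.Partition.card_toYD]; omega⟩
  obtain ⟨B, hsum, hB⟩ := hΛ.exists_sytCard_add_eq
  simp only [Nat.Partition.card_toYD] at hsum hB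
  have hdiff : (dPart lam : ℝ) - n.choose j * dPart μ * (1 - j / n) = -B := by
    rw [mul_right_comm, Nat.cast_choose_mul_one_sub_div (by omega) (by omega)]
    have : (dPart lam : ℝ) + B = (n - 1).choose j * dPart μ := by exact_mod_cast hsum
    linarith
  rw [hdiff, abs_neg, Nat.abs_cast, le_div_iff₀ (pow_pos (Nat.cast_pos.2 (by omega)) 2)]
  exact_mod_cast calc B * n ^ 2
      _ ≤ 4 * (B * n.choose 2) := by
        rw [mul_left_comm]; exact Nat.mul_le_mul_left B (Nat.sq_le_four_mul_choose_two (by omega))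
      _ ≤ 4 * (K * n.choose j * dPart μ) := Nat.mul_le_mul_left 4 hB
      _ ≤ (4 * K + 1) * n.choose j * dPart μ := by
        rw [add_mul, add_mul, ← mul_assoc, ← mul_assoc]; omega

/-- Asymptotic hook-length formula: for a fixed partition `μ` of `j ≥ 1`, letting
`λ(n) = (n−j, μ)` be the partition of `n` obtained by prepending a first row `n−j`,
one has `d_{λ(n)} = C(n,j)·d_μ·(1 − j/n + O(1/n²))` as `n → ∞`. -/
theorem asymptotic_hook_length_formula (j : ℕ) (hj : 1 ≤ j) (μ : Nat.Partition j) :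
    ∃ C : ℝ, 0 < C ∧ ∃ N : ℕ, ∀ n ≥ N, ∀ lam : Nat.Partition n,
      lam.parts = (n - j) ::ₘ μ.parts →
      |(dPart lam : ℝ) - (n.choose j : ℝ) * (dPart μ : ℝ) * (1 - (j : ℝ) / n)| ≤
        C * (n.choose j : ℝ) * (dPart μ : ℝ) / (n : ℝ) ^ 2 :=
  asymptotic_hook_length_formula_general j μ
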